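/- Let I be an open interval and f, g : I → ℝ be C² functions with nowhere vanishing first derivatives. Then A_f(a) ≤ A_g(a) for all n and all a ∈ I^n if and only if f″(t)/f′(t) ≤ g″(t)/g′(t) for all t ∈ I. -/

import Mathlib

/-- The `n`-variable quasiarithmetic mean on `I` generated by `f`. -/
noncomputable def QAMean (I : Set ℝ) (f : ℝ → ℝ) {n : ℕ} (a : Fin n → ℝ) : ℝ :=
  Function.invFunOn f I ((∑ i, f (a i)) / n)

/-!
Replacing `f` by `-f` changes neither `A_f` nor `f''/f'`, so we may assume `f', g' > 0`. Then
`A_f ≤ A_g` says that `φ = g ∘ f⁻¹` satisfies Jensen's inequality for equal weights on `f(I)`.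
By the Cauchy mean value theorem the slopes of `φ` are values of `g'/f'`, and
`(g'/f')' = (g'/f') (g''/g' - f''/f')`. Hence the derivative condition makes `φ` convex, while its
failure at a single point makes `φ` strictly concave near there, which already violates the
inequality for two-point means.
-/

open Set Function Metric

section Mean

variable {s : Set ℝ} {n : ℕ}

lemma Convex.image_of_continuousOn {f : ℝ → ℝ} (hs : Convex ℝ s) (hf : ContinuousOn f s) :
    Convex ℝ (f '' s) :=
  (hs.isPreconnected.image f hf).ordConnected.convex

lemma sum_smul_inv_eq_mean (p : Fin (n + 1) → ℝ) :
    ∑ i, ((n + 1 : ℕ) : ℝ)⁻¹ • p i = (∑ i, p i) / ((n + 1 : ℕ) : ℝ) := by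
  rw [← Finset.smul_sum, smul_eq_mul, inv_mul_eq_div]

lemma sum_inv_card_fin : ∑ _i : Fin (n + 1), ((n + 1 : ℕ) : ℝ)⁻¹ = 1 := by
  simp [mul_inv_cancel₀ (Nat.cast_add_one_ne_zero (R := ℝ) n)]

lemma Convex.mean_mem (hs : Convex ℝ s) {p : Fin (n + 1) → ℝ} (hp : ∀ i, p i ∈ s) :
    (∑ i, p i) / ((n + 1 : ℕ) : ℝ) ∈ s := by
  rw [← sum_smul_inv_eq_mean]
  exact hs.sum_mem (fun _ _ => by positivity) sum_inv_card_fin fun i _ => hp i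

lemma ConvexOn.map_mean_le {φ : ℝ → ℝ} (hφ : ConvexOn ℝ s φ) {p : Fin (n + 1) → ℝ}
    (hp : ∀ i, p i ∈ s) :
    φ ((∑ i, p i) / ((n + 1 : ℕ) : ℝ)) ≤ (∑ i, φ (p i)) / ((n + 1 : ℕ) : ℝ) := by
  rw [← sum_smul_inv_eq_mean, ← sum_smul_inv_eq_mean]
  exact hφ.map_sum_le (fun _ _ => by positivity) sum_inv_card_fin fun i _ => hp i

end Mean

section QAMean

variable {I : Set ℝ} {f g : ℝ → ℝ} {n : ℕ}

lemma invFunOn_neg (b : ℝ) : invFunOn (fun x => -f x) I (-b) = invFunOn f I b := by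
  have h : (fun x => x ∈ I ∧ -f x = -b) = fun x => x ∈ I ∧ f x = b := by simp only [neg_inj]
  unfold invFunOn
  rw [h]

lemma qamean_neg (a : Fin n → ℝ) : QAMean I (fun x => -f x) a = QAMean I f a := by
  simp only [QAMean, Finset.sum_neg_distrib, neg_div, invFunOn_neg]

lemma qamean_mem_and_apply (hI : Convex ℝ I) (hf : ContinuousOn f I) {a : Fin (n + 1) → ℝ}
    (ha : ∀ i, a i ∈ I) :
    QAMean I f a ∈ I ∧ f (QAMean I f a) = (∑ i, f (a i)) / ((n + 1 : ℕ) : ℝ) := by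
  refine invFunOn_pos ?_
  exact (hI.image_of_continuousOn hf).mean_mem fun i => ⟨a i, ha i, rfl⟩

lemma le_qamean_iff (hIc : Convex ℝ I) (hg : ContinuousOn g I) (hgm : StrictMonoOn g I)
    {a : Fin (n + 1) → ℝ} (ha : ∀ i, a i ∈ I) {x : ℝ} (hx : x ∈ I) :
    x ≤ QAMean I g a ↔ g x ≤ (∑ i, g (a i)) / ((n + 1 : ℕ) : ℝ) := by
  obtain ⟨hmem, happly⟩ := qamean_mem_and_apply hIc hg ha
  rw [← happly, hgm.le_iff_le hx hmem]

end QAMean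

section Slope

variable {J : Set ℝ} {f g φ : ℝ → ℝ}

lemma exists_slope_eq_deriv_div (hfd : DifferentiableOn ℝ f J) (hgd : DifferentiableOn ℝ g J)
    (hf' : ∀ x ∈ J, deriv f x ≠ 0) {A B : ℝ} (hAB : A < B) (hJ : Icc A B ⊆ J)
    (hfAB : f A ≠ f B) :
    ∃ ξ ∈ Ioo A B, (g B - g A) / (f B - f A) = deriv g ξ / deriv f ξ := by
  obtain ⟨ξ, hξ, h⟩ := exists_ratio_deriv_eq_ratio_slope f hAB (hfd.continuousOn.mono hJ)
    (hfd.mono (Ioo_subset_Icc_self.trans hJ)) g (hgd.continuousOn.mono hJ)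
    (hgd.mono (Ioo_subset_Icc_self.trans hJ))
  refine ⟨ξ, hξ, ?_⟩
  rw [div_eq_div_iff (sub_ne_zero.2 hfAB.symm) (hf' ξ (hJ (Ioo_subset_Icc_self hξ)))]
  linarith

variable (hJ : Convex ℝ J) (hfd : DifferentiableOn ℝ f J) (hgd : DifferentiableOn ℝ g J)
  (hf' : ∀ x ∈ J, 0 < deriv f x) (hφ : ∀ x ∈ J, φ (f x) = g x)
include hJ hfd hgd hf' hφ

lemma exists_adjacent_slopes_eq_deriv_div {x y z : ℝ} (hx : x ∈ f '' J) (hz : z ∈ f '' J)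
    (hxy : x < y) (hyz : y < z) :
    ∃ ξ₁ ∈ J, ∃ ξ₂ ∈ J, ξ₁ < ξ₂ ∧
      (φ y - φ x) / (y - x) = deriv g ξ₁ / deriv f ξ₁ ∧
      (φ z - φ y) / (z - y) = deriv g ξ₂ / deriv f ξ₂ := by
  have hfm : StrictMonoOn f J :=
    strictMonoOn_of_deriv_pos hJ hfd.continuousOn fun x hx => hf' x (interior_subset hx)
  have hy : y ∈ f '' J :=
    (hJ.image_of_continuousOn hfd.continuousOn).ordConnected.out hx hz ⟨hxy.le, hyz.le⟩
  obtain ⟨A, hA, rfl⟩ := hx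
  obtain ⟨B, hB, rfl⟩ := hy
  obtain ⟨C, hC, rfl⟩ := hz
  have hAB : A < B := (hfm.lt_iff_lt hA hB).1 hxy
  have hBC : B < C := (hfm.lt_iff_lt hB hC).1 hyz
  have hf0 : ∀ x ∈ J, deriv f x ≠ 0 := fun x hx => (hf' x hx).ne'
  obtain ⟨ξ₁, hξ₁, h₁⟩ := exists_slope_eq_deriv_div hfd hgd hf0 hAB
    (hJ.ordConnected.out hA hB) hxy.ne
  obtain ⟨ξ₂, hξ₂, h₂⟩ := exists_slope_eq_deriv_div hfd hgd hf0 hBC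
    (hJ.ordConnected.out hB hC) hyz.ne
  refine ⟨ξ₁, hJ.ordConnected.out hA hB (Ioo_subset_Icc_self hξ₁),
    ξ₂, hJ.ordConnected.out hB hC (Ioo_subset_Icc_self hξ₂), hξ₁.2.trans hξ₂.1, ?_, ?_⟩
  · rwa [hφ A hA, hφ B hB]
  · rwa [hφ B hB, hφ C hC]

lemma convexOn_of_monotoneOn_deriv_div
    (hmono : MonotoneOn (fun x => deriv g x / deriv f x) J) : ConvexOn ℝ (f '' J) φ :=
  convexOn_of_slope_mono_adjacent (hJ.image_of_continuousOn hfd.continuousOn)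
    fun hx hz hxy hyz => by
      obtain ⟨ξ₁, h₁, ξ₂, h₂, hlt, e₁, e₂⟩ :=
        exists_adjacent_slopes_eq_deriv_div hJ hfd hgd hf' hφ hx hz hxy hyz
      rw [e₁, e₂]
      exact hmono h₁ h₂ hlt.le

lemma strictConcaveOn_of_strictAntiOn_deriv_div
    (hanti : StrictAntiOn (fun x => deriv g x / deriv f x) J) : StrictConcaveOn ℝ (f '' J) φ :=
  strictConcaveOn_of_slope_strict_anti_adjacent
    (hJ.image_of_continuousOn hfd.continuousOn)
    fun hx hz hxy hyz => by
      obtain ⟨ξ₁, h₁, ξ₂, h₂, hlt, e₁, e₂⟩ :=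
        exists_adjacent_slopes_eq_deriv_div hJ hfd hgd hf' hφ hx hz hxy hyz
      rw [e₁, e₂]
      exact hanti h₁ h₂ hlt

end Slope

lemma hasDerivAt_div_eq_mul_logDeriv_sub {u v : ℝ → ℝ} {x : ℝ} (hu : DifferentiableAt ℝ u x)
    (hv : DifferentiableAt ℝ v x) (hu0 : u x ≠ 0) (hv0 : v x ≠ 0) :
    HasDerivAt (fun y => u y / v y) (u x / v x * (logDeriv u x - logDeriv v x)) x := by
  refine (hu.hasDerivAt.div hv.hasDerivAt hv0).congr_deriv ?_
  simp only [logDeriv_apply]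
  field_simp

section ContDiffTwo

variable {I : Set ℝ} {f g : ℝ → ℝ}

lemma ContDiffOn.differentiableOn_deriv_of_isOpen (hI : IsOpen I) (hf : ContDiffOn ℝ 2 f I) :
    DifferentiableOn ℝ (deriv f) I :=
  (hf.deriv_of_isOpen hI (by norm_num : (1 : WithTop ℕ∞) + 1 ≤ 2)).differentiableOn one_ne_zero

lemma ContDiffOn.continuousOn_logDeriv_deriv (hI : IsOpen I) (hf : ContDiffOn ℝ 2 f I)
    (hf' : ∀ x ∈ I, deriv f x ≠ 0) : ContinuousOn (logDeriv (deriv f)) I :=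
  ((hf.deriv_of_isOpen hI (by norm_num : (1 : WithTop ℕ∞) + 1 ≤ 2)).continuousOn_deriv_of_isOpen
    hI le_rfl).div (hf.differentiableOn_deriv_of_isOpen hI).continuousOn hf'

variable (hI : IsOpen I) (hf : ContDiffOn ℝ 2 f I) (hg : ContDiffOn ℝ 2 g I)
  (hf' : ∀ x ∈ I, 0 < deriv f x) (hg' : ∀ x ∈ I, 0 < deriv g x)
include hI hf hg hf' hg'

lemma hasDerivAt_deriv_div_deriv {x : ℝ} (hx : x ∈ I) :
    HasDerivAt (fun y => deriv g y / deriv f y)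
      (deriv g x / deriv f x * (logDeriv (deriv g) x - logDeriv (deriv f) x)) x :=
  hasDerivAt_div_eq_mul_logDeriv_sub
    ((hg.differentiableOn_deriv_of_isOpen hI).differentiableAt (hI.mem_nhds hx))
    ((hf.differentiableOn_deriv_of_isOpen hI).differentiableAt (hI.mem_nhds hx))
    (hg' x hx).ne' (hf' x hx).ne'

lemma monotoneOn_deriv_div_of_logDeriv_le (hIc : Convex ℝ I)
    (h : ∀ x ∈ I, logDeriv (deriv f) x ≤ logDeriv (deriv g) x) :
    MonotoneOn (fun x => deriv g x / deriv f x) I := by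
  have hd := fun x (hx : x ∈ I) => hasDerivAt_deriv_div_deriv hI hf hg hf' hg' hx
  refine monotoneOn_of_deriv_nonneg hIc (fun x hx => (hd x hx).continuousAt.continuousWithinAt)
    (fun x hx => (hd x (interior_subset hx)).differentiableAt.differentiableWithinAt) ?_
  rw [hI.interior_eq]
  intro x hx
  rw [(hd x hx).deriv]
  exact mul_nonneg (div_pos (hg' x hx) (hf' x hx)).le (sub_nonneg.2 (h x hx))

lemma exists_ball_strictAntiOn_deriv_div_of_logDeriv_lt {t : ℝ} (ht : t ∈ I)
    (hlt : logDeriv (deriv g) t < logDeriv (deriv f) t) :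
    ∃ ε > 0, ball t ε ⊆ I ∧ StrictAntiOn (fun x => deriv g x / deriv f x) (ball t ε) := by
  have hcont : ContinuousAt (fun x => logDeriv (deriv g) x - logDeriv (deriv f) x) t :=
    ((hg.continuousOn_logDeriv_deriv hI fun x hx => (hg' x hx).ne').sub
      (hf.continuousOn_logDeriv_deriv hI fun x hx => (hf' x hx).ne')).continuousAt
      (hI.mem_nhds ht)
  obtain ⟨ε, hε, hball⟩ := Metric.eventually_nhds_iff_ball.1
    ((hI.eventually_mem ht).and (hcont.eventually (gt_mem_nhds (sub_neg.2 hlt))))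
  have hd := fun x (hx : x ∈ ball t ε) => hasDerivAt_deriv_div_deriv hI hf hg hf' hg' (hball x hx).1
  refine ⟨ε, hε, fun x hx => (hball x hx).1, strictAntiOn_of_deriv_neg (convex_ball t ε)
    (fun x hx => (hd x hx).continuousAt.continuousWithinAt) ?_⟩
  rw [isOpen_ball.interior_eq]
  intro x hx
  rw [(hd x hx).deriv]
  exact mul_neg_of_pos_of_neg (div_pos (hg' x (hball x hx).1) (hf' x (hball x hx).1)) (hball x hx).2

end ContDiffTwo

section Comparison

variable {I : Set ℝ} {f g : ℝ → ℝ} {n : ℕ}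
  (hI : IsOpen I) (hIc : Convex ℝ I) (hf : ContDiffOn ℝ 2 f I) (hg : ContDiffOn ℝ 2 g I)
  (hf' : ∀ x ∈ I, 0 < deriv f x) (hg' : ∀ x ∈ I, 0 < deriv g x)
include hI hIc hf hg hf' hg'

lemma logDeriv_deriv_le_of_qamean_le
    (h : ∀ a : Fin 2 → ℝ, (∀ i, a i ∈ I) → QAMean I f a ≤ QAMean I g a) {t : ℝ} (ht : t ∈ I) :
    logDeriv (deriv f) t ≤ logDeriv (deriv g) t := by
  by_contra! hlt
  obtain ⟨ε, hε, hBI, hanti⟩ :=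
    exists_ball_strictAntiOn_deriv_div_of_logDeriv_lt hI hf hg hf' hg' ht hlt
  have hfd := hf.differentiableOn (by norm_num)
  have hgd := hg.differentiableOn (by norm_num)
  have hfm : StrictMonoOn f I :=
    strictMonoOn_of_deriv_pos hIc hfd.continuousOn fun x hx => hf' x (interior_subset hx)
  have hgm : StrictMonoOn g I :=
    strictMonoOn_of_deriv_pos hIc hgd.continuousOn fun x hx => hg' x (interior_subset hx)
  have hconc : StrictConcaveOn ℝ (f '' ball t ε) fun y => g (invFunOn f I y) :=
    strictConcaveOn_of_strictAntiOn_deriv_div (convex_ball t ε) (hfd.mono hBI) (hgd.mono hBI)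
      (fun x hx => hf' x (hBI hx)) (fun x hx => congrArg g (hfm.injOn.leftInvOn_invFunOn (hBI hx)))
      hanti
  set a : Fin 2 → ℝ := ![t - ε / 2, t + ε / 2]
  have ha : ∀ i, a i ∈ ball t ε := by
    intro i
    fin_cases i <;> simp [a, abs_of_pos, hε]
  have hmid : (g (a 0) + g (a 1)) / 2 < g (QAMean I f a) := by
    have h01 : f (a 0) ≠ f (a 1) := hfm.injOn.ne (hBI (ha 0)) (hBI (ha 1)) (by simp [a]; linarith)
    have := hconc.2 ⟨a 0, ha 0, rfl⟩ ⟨a 1, ha 1, rfl⟩ h01 one_half_pos one_half_pos (add_halves 1)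
    simp only [hfm.injOn.leftInvOn_invFunOn (hBI (ha 0)),
      hfm.injOn.leftInvOn_invFunOn (hBI (ha 1)), smul_eq_mul] at this
    have hQ : QAMean I f a = invFunOn f I (1 / 2 * f (a 0) + 1 / 2 * f (a 1)) := by
      show invFunOn f I ((∑ i, f (a i)) / ((2 : ℕ) : ℝ)) = _
      rw [Fin.sum_univ_two]
      congr 1
      push_cast
      ring
    rw [hQ]
    linarith
  have hle := (le_qamean_iff hIc hgd.continuousOn hgm (fun i => hBI (ha i))
    (qamean_mem_and_apply hIc hfd.continuousOn fun i => hBI (ha i)).1).1 (h a fun i => hBI (ha i))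
  rw [Fin.sum_univ_two] at hle
  linarith

lemma qamean_le_qamean_of_logDeriv_le
    (h : ∀ t ∈ I, logDeriv (deriv f) t ≤ logDeriv (deriv g) t) {a : Fin (n + 1) → ℝ}
    (ha : ∀ i, a i ∈ I) : QAMean I f a ≤ QAMean I g a := by
  have hfd := hf.differentiableOn (by norm_num)
  have hgd := hg.differentiableOn (by norm_num)
  have hfm : StrictMonoOn f I :=
    strictMonoOn_of_deriv_pos hIc hfd.continuousOn fun x hx => hf' x (interior_subset hx)
  have hgm : StrictMonoOn g I :=
    strictMonoOn_of_deriv_pos hIc hgd.continuousOn fun x hx => hg' x (interior_subset hx)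
  have hconv : ConvexOn ℝ (f '' I) fun y => g (invFunOn f I y) :=
    convexOn_of_monotoneOn_deriv_div hIc hfd hgd hf'
      (fun x hx => congrArg g (hfm.injOn.leftInvOn_invFunOn hx))
      (monotoneOn_deriv_div_of_logDeriv_le hI hf hg hf' hg' hIc h)
  rw [le_qamean_iff hIc hgd.continuousOn hgm ha (qamean_mem_and_apply hIc hfd.continuousOn ha).1]
  have hjensen := hconv.map_mean_le (p := fun i => f (a i)) fun i => ⟨a i, ha i, rfl⟩
  simp only [hfm.injOn.leftInvOn_invFunOn (ha _)] at hjensen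
  exact hjensen

end Comparison

lemma logDeriv_deriv_neg (f : ℝ → ℝ) : logDeriv (deriv fun x => -f x) = logDeriv (deriv f) := by
  ext t
  simp only [deriv.fun_neg', logDeriv_apply, neg_div_neg_eq]

lemma exists_deriv_pos_qamean_eq {I : Set ℝ} {f : ℝ → ℝ} (hI : IsOpen I) (hIc : Convex ℝ I)
    (hf : ContDiffOn ℝ 2 f I) (hf' : ∀ x ∈ I, deriv f x ≠ 0) :
    ∃ f₁ : ℝ → ℝ, ContDiffOn ℝ 2 f₁ I ∧ (∀ x ∈ I, 0 < deriv f₁ x) ∧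
      (∀ {n : ℕ} (a : Fin n → ℝ), QAMean I f₁ a = QAMean I f a) ∧
      logDeriv (deriv f₁) = logDeriv (deriv f) := by
  have hfd := hf.differentiableOn (by norm_num)
  rcases hasDerivWithinAt_forall_lt_or_forall_gt_of_forall_ne hIc
    (fun x hx => ((hfd x hx).differentiableAt (hI.mem_nhds hx)).hasDerivAt.hasDerivWithinAt) hf'
    with hneg | hpos
  · refine ⟨fun x => -f x, hf.neg, fun x hx => ?_, qamean_neg, logDeriv_deriv_neg f⟩
    rw [deriv.fun_neg]
    exact neg_pos.2 (hneg x hx)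
  · exact ⟨f, hf, hpos, fun _ => rfl, rfl⟩

theorem stmt_14 (I : Set ℝ) (hIop : IsOpen I) (hIcv : Convex ℝ I)
    (f g : ℝ → ℝ)
    (hf : ContDiffOn ℝ 2 f I) (hf' : ∀ x ∈ I, deriv f x ≠ 0)
    (hg : ContDiffOn ℝ 2 g I) (hg' : ∀ x ∈ I, deriv g x ≠ 0) :
    (∀ n : ℕ, ∀ a : Fin (n + 1) → ℝ, (∀ i, a i ∈ I) →
        QAMean I f a ≤ QAMean I g a) ↔
    (∀ t ∈ I, deriv (deriv f) t / deriv f t ≤ deriv (deriv g) t / deriv g t) := by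
  obtain ⟨f₁, hf₁, hf₁', hQf, hLf⟩ := exists_deriv_pos_qamean_eq hIop hIcv hf hf'
  obtain ⟨g₁, hg₁, hg₁', hQg, hLg⟩ := exists_deriv_pos_qamean_eq hIop hIcv hg hg'
  change _ ↔ ∀ t ∈ I, logDeriv (deriv f) t ≤ logDeriv (deriv g) t
  simp only [← hQf, ← hQg, ← hLf, ← hLg]
  exact ⟨fun h t ht => logDeriv_deriv_le_of_qamean_le hIop hIcv hf₁ hg₁ hf₁' hg₁'
      (fun a ha => h 1 a ha) ht,
    fun h n a ha => qamean_le_qamean_of_logDeriv_le hIop hIcv hf₁ hg₁ hf₁' hg₁' h ha⟩
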